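/- arXiv:math/0204292 — 6 statements merged into one kernel-verified Lean document; each statement's English description precedes it below -/
import Mathlib

section
/- A right ideal R = P·A* of A* is essential if and only if the prefix code P is a maximal prefix code (i.e., P is not a strict subset of any other prefix code over A). -/
variable {A : Type*}

/-- `R` is a right ideal of the free monoid `A*`: closed under right concatenation. -/
def IsRightIdeal (R : Set (List A)) : Prop :=
  ∀ r ∈ R, ∀ x : List A, r ++ x ∈ R

/-- A prefix code: no element is a strict prefix of another element. -/
def IsPrefixCode (P : Set (List A)) : Prop :=
  ∀ p ∈ P, ∀ q ∈ P, p <+: q → p = q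

/-- The right ideal `P·A*` generated by `P`. -/
def genIdeal (P : Set (List A)) : Set (List A) :=
  {w | ∃ p ∈ P, ∃ x : List A, w = p ++ x}

/-- A maximal prefix code: a prefix code not strictly contained in any other prefix code. -/
def IsMaximalPrefixCode (P : Set (List A)) : Prop :=
  IsPrefixCode P ∧ ∀ Q : Set (List A), IsPrefixCode Q → P ⊆ Q → P = Q

/--  is essential: it meets every nonempty right ideal. -/
def IsEssential (R : Set (List A)) : Prop :=
  ∀ J : Set (List A), IsRightIdeal J → J.Nonempty → (R ∩ J).Nonempty

lemma genIdeal_isRightIdeal (P : Set (List A)) : IsRightIdeal (genIdeal P) := by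
  rintro r ⟨p, hp, x, rfl⟩ y
  exact ⟨p, hp, x ++ y, by simp⟩

/-- P·A* is essential iff P is a maximal prefix code. -/
theorem essential_iff_maximalPrefixCode [Fintype A] (hA : 2 ≤ Fintype.card A)
    (P : Set (List A)) (hP : IsPrefixCode P) :
    IsEssential (genIdeal P) ↔ IsMaximalPrefixCode P := by
  constructor
  · intro hE
    refine ⟨hP, fun Q hQ hPQ => ?_⟩
    apply Set.Subset.antisymm hPQ
    intro q hq
    obtain ⟨w, ⟨p, hp, x, hwx⟩, q', hq', y, hwy⟩ :=
      hE (genIdeal {q}) (genIdeal_isRightIdeal _) ⟨q, q, rfl, [], by simp⟩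
    rw [Set.mem_singleton_iff] at hq'
    rw [hq'] at hwy
    have hcomp : p <+: q ∨ q <+: p := by
      rcases List.prefix_or_prefix_of_prefix (l₃ := w) ⟨x, hwx.symm⟩ ⟨y, hwy.symm⟩ with h | h
      · exact Or.inl h
      · exact Or.inr h
    have : p = q := by
      rcases hcomp with h | h
      · exact hQ p (hPQ hp) q hq h
      · exact (hQ q hq p (hPQ hp) h).symm
    exact this ▸ hp
  · rintro ⟨-, hmax⟩ J hJ ⟨w, hw⟩
    by_cases h1 : ∃ p ∈ P, p <+: w
    · obtain ⟨p, hp, x, hx⟩ := h1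
      exact ⟨w, ⟨p, hp, x, hx.symm⟩, hw⟩
    by_cases h2 : ∃ p ∈ P, w <+: p
    · obtain ⟨p, hp, x, hx⟩ := h2
      exact ⟨w ++ x, ⟨p, hp, [], by simp [hx]⟩, hJ w hw x⟩
    exfalso
    push_neg at h1 h2
    have hQ : IsPrefixCode (insert w P) := by
      rintro p (rfl | hp) q (rfl | hq) hpre
      · rfl
      · exact absurd hpre (h2 q hq)
      · exact absurd hpre (h1 p hp)
      · exact hP p hp q hq hpre
    have := hmax (insert w P) hQ (Set.subset_insert _ _)
    have hwP : w ∈ P := this ▸ Set.mem_insert w P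
    exact h1 w hwP List.prefix_rfl
end

section
/- If P, Q, R ⊆ A* satisfy P·A* ∩ Q·A* = R·A* and R is a prefix code, then R ⊆ P ∪ Q. In particular, the intersection of two finitely generated right ideals of A* is a finitely generated right ideal. -/
variable {A : Type*}

lemma mem_genIdeal_self {R : Set (List A)} {r : List A} (hr : r ∈ R) : r ∈ genIdeal R :=
  ⟨r, hr, [], by simp⟩

lemma genIdeal_closed {P : Set (List A)} {w : List A} (hw : w ∈ genIdeal P) (x : List A) :
    w ++ x ∈ genIdeal P := by
  obtain ⟨p, hp, y, hy⟩ := hw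
  exact ⟨p, hp, y ++ x, by rw [hy, List.append_assoc]⟩

lemma genIdeal_subset_union (P Q R : Set (List A))
    (h : genIdeal P ∩ genIdeal Q = genIdeal R) (hR : IsPrefixCode R) : R ⊆ P ∪ Q := by
  intro r hr
  have hrI : r ∈ genIdeal P ∩ genIdeal Q := h ▸ mem_genIdeal_self hr
  obtain ⟨⟨p, hp, x, hx⟩, ⟨q, hq, y, hy⟩⟩ := hrI
  have hpr : p <+: r := ⟨x, hx.symm⟩
  have hqr : q <+: r := ⟨y, hy.symm⟩
  have key : ∀ s : List A, s ∈ genIdeal P → s ∈ genIdeal Q → s <+: r → r = s := by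
    intro s hsP hsQ hsr
    have hsR : s ∈ genIdeal R := by rw [← h]; exact ⟨hsP, hsQ⟩
    obtain ⟨r', hr', z, hz⟩ := hsR
    have hr's : r' <+: s := ⟨z, hz.symm⟩
    have : r' = r := hR r' hr' r hr (hr's.trans hsr)
    subst this
    exact (hsr.eq_of_length (le_antisymm hsr.length_le hr's.length_le)).symm
  rcases List.prefix_or_prefix_of_prefix hpr hqr with hpq | hqp
  · right
    have : r = q := key q (⟨p, hp, hpq.choose, hpq.choose_spec.symm⟩) (mem_genIdeal_self hq) hqr
    rwa [this]
  · left
    have : r = p := key p (mem_genIdeal_self hp) (⟨q, hq, hqp.choose, hqp.choose_spec.symm⟩) hpr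
    rwa [this]

/-- if P·A* ∩ Q·A* = R·A* with R a prefix code then R ⊆ P ∪ Q; hence the
intersection of two finitely generated right ideals is finitely generated. -/
theorem inter_genIdeals (A : Type*) :
    (∀ P Q R : Set (List A), genIdeal P ∩ genIdeal Q = genIdeal R → IsPrefixCode R →
      R ⊆ P ∪ Q) ∧
    (∀ P Q : Set (List A), P.Finite → Q.Finite → IsPrefixCode P → IsPrefixCode Q →
      ∃ R : Set (List A), R.Finite ∧ IsPrefixCode R ∧
        genIdeal P ∩ genIdeal Q = genIdeal R) := by
  refine ⟨genIdeal_subset_union, ?_⟩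
  intro P Q hPf hQf _ _
  set I : Set (List A) := genIdeal P ∩ genIdeal Q with hI
  set R : Set (List A) := {w | w ∈ I ∧ ∀ v ∈ I, v <+: w → v = w} with hRdef
  have hRpc : IsPrefixCode R := by
    intro r1 h1 r2 h2 h12
    exact h2.2 r1 h1.1 h12
  have heq : genIdeal P ∩ genIdeal Q = genIdeal R := by
    apply Set.eq_of_subset_of_subset
    · intro w hw
      have key : ∀ n (w : List A), w.length = n → w ∈ I → w ∈ genIdeal R := by
        intro n
        induction n using Nat.strong_induction_on with
        | _ n ih =>
          intro w hlen hw
          by_cases hmin : ∀ v ∈ I, v <+: w → v = w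
          · exact mem_genIdeal_self ⟨hw, hmin⟩
          · push_neg at hmin
            obtain ⟨v, hvI, hvw, hne⟩ := hmin
            have hlt : v.length < n :=
              hlen ▸ lt_of_le_of_ne hvw.length_le
                (fun he => hne (hvw.eq_of_length he))
            obtain ⟨r, hr, x, hx⟩ := ih _ hlt v rfl hvI
            obtain ⟨z, hz⟩ := hvw
            exact ⟨r, hr, x ++ z, by rw [← hz, hx, List.append_assoc]⟩
      exact key w.length w rfl hw
    · rintro w ⟨r, hr, x, hx⟩
      have hrI : r ∈ I := hr.1
      exact hx ▸ ⟨genIdeal_closed hrI.1 x, genIdeal_closed hrI.2 x⟩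
  have hRsub : R ⊆ P ∪ Q := genIdeal_subset_union P Q R heq hRpc
  exact ⟨R, (hPf.union hQf).subset hRsub, hRpc, heq⟩
end

section
/- If P and Q are maximal prefix codes over A with P·A* ⊆ Q·A*, then the cardinality of Q is at most the cardinality of P. -/
variable {A : Type*}

lemma maximal_comparable {P : Set (List A)} (hP : IsMaximalPrefixCode P) (w : List A) :
    ∃ p ∈ P, p <+: w ∨ w <+: p := by
  by_contra h
  push_neg at h
  have hpc : IsPrefixCode (P ∪ {w}) := by
    rintro p (hp | rfl) q (hq | rfl) hpq
    · exact hP.1 p hp q hq hpq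
    · exact absurd hpq (h p hp).1
    · exact absurd hpq (h q hq).2
    · rfl
  have heq := hP.2 _ hpc Set.subset_union_left
  have hw : w ∈ P := heq ▸ Set.mem_union_right _ rfl
  exact (h w hw).1 List.prefix_rfl

/-- if P, Q are maximal prefix codes with P·A* ⊆ Q·A*, then |Q| ≤ |P|
(there is a surjection from P onto Q). -/
theorem card_le_of_genIdeal_subset [Fintype A] (hA : 2 ≤ Fintype.card A)
    (P Q : Set (List A)) (hP : IsMaximalPrefixCode P) (hQ : IsMaximalPrefixCode Q)
    (hsub : genIdeal P ⊆ genIdeal Q) :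
    ∃ f : P → Q, Function.Surjective f := by
  have hget : ∀ p ∈ P, ∃ q ∈ Q, q <+: p := by
    intro p hp
    obtain ⟨q, hq, x, hx⟩ := hsub ⟨p, hp, [], (List.append_nil p).symm⟩
    exact ⟨q, hq, x, hx.symm⟩
  choose g hgQ hgpre using hget
  refine ⟨fun p => ⟨g p.1 p.2, hgQ p.1 p.2⟩, ?_⟩
  rintro ⟨q, hq⟩
  obtain ⟨p, hp, hcomp | hcomp⟩ := maximal_comparable hP q
  · refine ⟨⟨p, hp⟩, Subtype.ext ?_⟩
    exact hQ.1 _ (hgQ p hp) q hq ((hgpre p hp).trans hcomp)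
  · refine ⟨⟨p, hp⟩, Subtype.ext ?_⟩
    rcases List.prefix_or_prefix_of_prefix (hgpre p hp) hcomp with h1 | h1
    · exact hQ.1 _ (hgQ p hp) q hq h1
    · exact (hQ.1 q hq _ (hgQ p hp) h1).symm
end

section
/- An isomorphism between essential right ideals of A* has a unique maximum extension: if two isomorphisms between essential right ideals agree on an essential right ideal, then they have the same maximum extension. Specifically, any two extensions of a fixed isomorphism φ between essential right ideals agree on the intersection of their domains. -/
variable {A : Type*}

/-- uniqueness of the maximum extension: any two extensions of a fixed
isomorphism φ between essential right ideals agree on the intersection of their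
domains. -/
theorem extensions_agree (R R₂ J₁ K₁ J₂ K₂ : Set (List A))
    (φ Φ₁ Φ₂ : List A → List A)
    (hR : IsRightIdeal R) (hR₂ : IsRightIdeal R₂)
    (hRe : ∀ u : List A, ∃ z : List A, u ++ z ∈ R)
    (hR₂e : ∀ u : List A, ∃ z : List A, u ++ z ∈ R₂)
    (hbij : Set.BijOn φ R R₂)
    (hhom : ∀ u ∈ R, ∀ z : List A, φ (u ++ z) = φ u ++ z)
    (hJ₁ : IsRightIdeal J₁) (hK₁ : IsRightIdeal K₁)
    (hJ₂ : IsRightIdeal J₂) (hK₂ : IsRightIdeal K₂)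
    (hbij₁ : Set.BijOn Φ₁ J₁ K₁)
    (hhom₁ : ∀ u ∈ J₁, ∀ z : List A, Φ₁ (u ++ z) = Φ₁ u ++ z)
    (hbij₂ : Set.BijOn Φ₂ J₂ K₂)
    (hhom₂ : ∀ u ∈ J₂, ∀ z : List A, Φ₂ (u ++ z) = Φ₂ u ++ z)
    (hext₁ : R ⊆ J₁) (hagr₁ : ∀ w ∈ R, Φ₁ w = φ w)
    (hext₂ : R ⊆ J₂) (hagr₂ : ∀ w ∈ R, Φ₂ w = φ w) :
    ∀ w ∈ J₁ ∩ J₂, Φ₁ w = Φ₂ w := by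
  rintro w ⟨hw₁, hw₂⟩
  obtain ⟨z, hz⟩ := hRe w
  have h1 : Φ₁ (w ++ z) = Φ₁ w ++ z := hhom₁ w hw₁ z
  have h2 : Φ₂ (w ++ z) = Φ₂ w ++ z := hhom₂ w hw₂ z
  have : Φ₁ w ++ z = Φ₂ w ++ z := by
    rw [← h1, ← h2, hagr₁ _ hz, hagr₂ _ hz]
  exact List.append_cancel_right this
end

section
/- For right-ideal isomorphisms φ₁, φ₂ between essential right ideals of A* with finite domain/range codes, the table size of the functional composition satisfies ‖φ₂ ∘ φ₁‖ ≤ ‖φ₂‖ + ‖φ₁‖, where ‖φ‖ denotes the cardinality of the (maximal prefix code) domain of the table of φ. -/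
variable {A : Type*}

set_option maxHeartbeats 1000000 in
/-- table size of a composition: ‖φ₂ ∘ φ₁‖ ≤ ‖φ₂‖ + ‖φ₁‖. -/
theorem tableSize_comp_le (P₁ Q₁ P₂ Q₂ R : Set (List A))
    (h₁ : IsMaximalPrefixCode P₁) (hq₁ : IsMaximalPrefixCode Q₁)
    (h₂ : IsMaximalPrefixCode P₂) (hq₂ : IsMaximalPrefixCode Q₂)
    (hf₁ : P₁.Finite) (hfq₁ : Q₁.Finite) (hf₂ : P₂.Finite) (hfq₂ : Q₂.Finite)
    (φ₁ φ₂ : List A → List A)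
    (hbij₁ : Set.BijOn φ₁ (genIdeal P₁) (genIdeal Q₁))
    (hhom₁ : ∀ u ∈ genIdeal P₁, ∀ x : List A, φ₁ (u ++ x) = φ₁ u ++ x)
    (hbij₂ : Set.BijOn φ₂ (genIdeal P₂) (genIdeal Q₂))
    (hhom₂ : ∀ u ∈ genIdeal P₂, ∀ x : List A, φ₂ (u ++ x) = φ₂ u ++ x)
    (hR : IsMaximalPrefixCode R)
    (hdom : genIdeal R = {w ∈ genIdeal P₁ | φ₁ w ∈ genIdeal P₂}) :
    R.ncard ≤ P₂.ncard + P₁.ncard := by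
  -- every element of R lies in genIdeal P₁ and maps into genIdeal P₂
  have hmemR : ∀ r ∈ R, r ∈ genIdeal R := fun r hr => ⟨r, hr, [], by simp⟩
  have hRsub : ∀ r ∈ R, r ∈ genIdeal P₁ ∧ φ₁ r ∈ genIdeal P₂ := by
    intro r hr
    have h := hmemR r hr
    rw [hdom] at h
    exact h
  -- elements of genIdeal R have a prefix in R
  -- key lemma: if r ∈ R and r ∉ P₁ then φ₁ r ∈ P₂
  have key : ∀ r ∈ R, r ∉ P₁ → φ₁ r ∈ P₂ := by
    intro r hr hrP₁
    obtain ⟨hrP, hφP⟩ := hRsub r hr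
    obtain ⟨p₁, hp₁, x, hx⟩ := hrP
    have hxne : x ≠ [] := by
      rintro rfl
      simp at hx
      exact hrP₁ (hx ▸ hp₁)
    have hp₁mem : p₁ ∈ genIdeal P₁ := ⟨p₁, hp₁, [], by simp⟩
    have hφr : φ₁ r = φ₁ p₁ ++ x := by rw [hx]; exact hhom₁ p₁ hp₁mem x
    obtain ⟨p₂, hp₂, y, hy⟩ := hφP
    -- φ₁ p₁ ∉ genIdeal P₂, else p₁ ∈ genIdeal R leads to contradiction
    have hnot : φ₁ p₁ ∉ genIdeal P₂ := by
      intro hin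
      have : p₁ ∈ genIdeal R := by rw [hdom]; exact ⟨hp₁mem, hin⟩
      obtain ⟨r', hr', z, hz⟩ := this
      have hrr' : r' = r := hR.1 r' hr' r hr ⟨z ++ x, by rw [hx, hz, List.append_assoc]⟩
      have : r.length ≤ p₁.length := hrr' ▸ (hz ▸ ⟨z, rfl⟩ : r' <+: p₁).length_le
      rw [hx] at this
      simp at this
      exact hxne this
    -- compare p₂ and φ₁ p₁ as prefixes of φ₁ r
    have hpre1 : φ₁ p₁ <+: φ₁ r := ⟨x, hφr.symm⟩
    have hpre2 : p₂ <+: φ₁ r := ⟨y, hy.symm⟩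
    have hlen : ¬ p₂.length ≤ (φ₁ p₁).length := by
      intro hle
      have := List.prefix_of_prefix_length_le hpre2 hpre1 hle
      obtain ⟨t, ht⟩ := this
      exact hnot ⟨p₂, hp₂, t, ht.symm⟩
    have hpre : φ₁ p₁ <+: p₂ :=
      List.prefix_of_prefix_length_le hpre1 hpre2 (le_of_not_ge hlen)
    obtain ⟨s, hs⟩ := hpre
    -- s is a prefix of x
    have hsx : s ++ y = x := by
      have : φ₁ p₁ ++ x = (φ₁ p₁ ++ s) ++ y := by rw [hs, ← hy, hφr]
      rw [List.append_assoc] at this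
      exact (List.append_cancel_left this).symm
    -- w' = p₁ ++ s ∈ genIdeal R, and it's a prefix of r, so w' = r
    have hw'P : (p₁ ++ s) ∈ genIdeal P₁ := ⟨p₁, hp₁, s, rfl⟩
    have hφw' : φ₁ (p₁ ++ s) = p₂ := by rw [hhom₁ p₁ hp₁mem s, hs]
    have hw'R : (p₁ ++ s) ∈ genIdeal R := by
      rw [hdom]; exact ⟨hw'P, by rw [hφw']; exact ⟨p₂, hp₂, [], by simp⟩⟩
    obtain ⟨r'', hr'', z, hz⟩ := hw'R
    have hr''r : r'' = r := by
      apply hR.1 r'' hr'' r hr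
      refine ⟨z ++ y, ?_⟩
      rw [hx, ← hsx, ← List.append_assoc, ← hz, List.append_assoc]
    have hrw' : r = p₁ ++ s := by
      have h1 : r'' <+: p₁ ++ s := ⟨z, hz.symm⟩
      have h2 : p₁ ++ s <+: r := ⟨y, by rw [hx, ← hsx, List.append_assoc]⟩
      rw [hr''r] at h1
      exact h1.eq_of_length (le_antisymm h1.length_le h2.length_le)
    rw [hrw', hφw']
    exact hp₂
  -- injectivity of φ₁ on R \ P₁
  have hinj : Set.InjOn φ₁ (R \ P₁) :=
    hbij₁.2.1.mono (fun r hr => (hRsub r hr.1).1)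
  have himg : φ₁ '' (R \ P₁) ⊆ P₂ := by
    rintro _ ⟨r, ⟨hr, hrP⟩, rfl⟩
    exact key r hr hrP
  have hfin2 : (R \ P₁).Finite :=
    Set.Finite.of_finite_image ((hf₂.subset himg)) hinj
  have hfin1 : (R ∩ P₁).Finite := hf₁.subset Set.inter_subset_right
  have hsplit : R = (R \ P₁) ∪ (R ∩ P₁) := by
    ext w; by_cases hw : w ∈ P₁ <;> simp [hw]
  calc R.ncard = ((R \ P₁) ∪ (R ∩ P₁)).ncard := by rw [← hsplit]
    _ ≤ (R \ P₁).ncard + (R ∩ P₁).ncard := Set.ncard_union_le _ _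
    _ ≤ P₂.ncard + P₁.ncard := by
        refine add_le_add ?_ (Set.ncard_le_ncard Set.inter_subset_right hf₁)
        calc (R \ P₁).ncard = (φ₁ '' (R \ P₁)).ncard :=
              (Set.ncard_image_of_injOn hinj).symm
          _ ≤ P₂.ncard := Set.ncard_le_ncard himg hf₂
end

section
/- For any nondecreasing function t : ℕ → ℕ with t(n) ≥ n for all n, there exists a superadditive function T : ℕ → ℕ (i.e., T(n+m) ≥ T(n) + T(m) for all n, m) such that t(n) ≤ T(n) ≤ n·t(n) for all n; namely T(n) = max over all partitions n = n₁ + ⋯ + n_k into positive parts of Σ t(n_i). -/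
def Tb (t : ℕ → ℕ) : ℕ → ℕ
  | 0 => 0
  | n+1 => max (t (n+1)) ((Finset.range n).attach.sup
      fun k => Tb t (k.1+1) + Tb t (n - k.1))
decreasing_by
  · have := Finset.mem_range.mp k.2; omega
  · omega

lemma Tb_zero (t : ℕ → ℕ) : Tb t 0 = 0 := by rw [Tb]

lemma Tb_succ (t : ℕ → ℕ) (n : ℕ) : Tb t (n+1) = max (t (n+1))
    ((Finset.range n).attach.sup fun k => Tb t (k.1+1) + Tb t (n - k.1)) := by
  rw [Tb]

lemma Tb_superadd (t : ℕ → ℕ) : ∀ n m, Tb t n + Tb t m ≤ Tb t (n + m) := by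
  intro n m
  match n, m with
  | 0, m => simp [Tb_zero]
  | n+1, 0 => simp [Tb_zero]
  | n+1, m+1 =>
    have h : n + 1 + (m + 1) = (n + m + 1) + 1 := by ring
    rw [h, Tb_succ t (n+m+1)]
    refine le_max_of_le_right ?_
    have hk : n ∈ Finset.range (n + m + 1) := Finset.mem_range.mpr (by omega)
    have := Finset.le_sup (f := fun k : {x // x ∈ Finset.range (n+m+1)} =>
      Tb t (k.1+1) + Tb t (n + m + 1 - k.1)) (Finset.mem_attach _ ⟨n, hk⟩)
    simpa [show n + m + 1 - n = m + 1 by omega] using this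

lemma Tb_upper (t : ℕ → ℕ) (hmono : Monotone t) : ∀ n, Tb t n ≤ n * t n := by
  intro n
  induction n using Nat.strong_induction_on with
  | _ n ih =>
    match n with
    | 0 => simp [Tb_zero]
    | n+1 =>
      rw [Tb_succ]
      apply max_le
      · exact Nat.le_mul_of_pos_left _ (by omega)
      · apply Finset.sup_le
        intro k _
        have hk := Finset.mem_range.mp k.2
        have h1 := ih (k.1+1) (by omega)
        have h2 := ih (n - k.1) (by omega)
        have hm1 : t (k.1+1) ≤ t (n+1) := hmono (by omega)
        have hm2 : t (n - k.1) ≤ t (n+1) := hmono (by omega)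
        calc Tb t (k.1+1) + Tb t (n - k.1)
            ≤ (k.1+1) * t (n+1) + (n - k.1) * t (n+1) := by
              exact Nat.add_le_add (h1.trans (Nat.mul_le_mul_left _ hm1))
                (h2.trans (Nat.mul_le_mul_left _ hm2))
          _ = ((k.1+1) + (n - k.1)) * t (n+1) := by ring
          _ = (n+1) * t (n+1) := by congr 1; omega

/-- every nondecreasing t with t(n) ≥ n is bounded between a
superadditive T and n·t(n): t(n) ≤ T(n) ≤ n·t(n) (for n ≥ 1). -/
theorem exists_superadditive_bound (t : ℕ → ℕ) (hmono : Monotone t)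
    (hge : ∀ n, n ≤ t n) :
    ∃ T : ℕ → ℕ, (∀ n m, T n + T m ≤ T (n + m)) ∧
      ∀ n, 1 ≤ n → t n ≤ T n ∧ T n ≤ n * t n := by
  refine ⟨Tb t, Tb_superadd t, fun n hn => ⟨?_, Tb_upper t hmono n⟩⟩
  obtain ⟨m, rfl⟩ := Nat.exists_eq_add_of_le hn
  rw [Nat.add_comm, Tb_succ]
  exact le_max_left _ _
end
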